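/- arXiv:1611.07170 — 4 statements merged into one kernel-verified Lean document; each statement's English description precedes it below -/
import Mathlib

section
/- A matrix polynomial Q(λ) ∈ F[λ]^{m×n} is a minimal basis if and only if Q(λ0) has full row rank for every λ0 in the algebraic closure of F, and the highest row degree coefficient matrix Q_h of Q(λ) has full row rank. -/
open Polynomial Matrix

/-- The row of a polynomial matrix viewed as a vector of rational functions. -/
noncomputable def ratRow {F : Type*} [Field F] {ν : Type*} (v : ν → Polynomial F) :
    ν → RatFunc F :=
  fun j => algebraMap (Polynomial F) (RatFunc F) (v j)

/-- The rational subspace spanned by the rows of a polynomial matrix. -/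
noncomputable def rowSpan {F : Type*} [Field F] {ρ ν : Type*}
    (Q : Matrix ρ ν (Polynomial F)) : Submodule (RatFunc F) (ν → RatFunc F) :=
  Submodule.span (RatFunc F) (Set.range fun i => ratRow (Q i))

/-- Degree of a polynomial row vector: the maximum of the degrees of its entries. -/
noncomputable def rowDegree {F : Type*} [Field F] {ν : Type*} [Fintype ν]
    (v : ν → Polynomial F) : ℕ :=
  Finset.univ.sup fun j => (v j).natDegree

/-- The order of a polynomial matrix: the sum of its row degrees. -/
noncomputable def polyOrder {F : Type*} [Field F] {ρ ν : Type*} [Fintype ρ] [Fintype ν]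
    (Q : Matrix ρ ν (Polynomial F)) : ℕ :=
  ∑ i, rowDegree (Q i)

/-- `Q` is a minimal basis: its rows are linearly independent over the field of rational
functions (hence a polynomial basis of the rational subspace they span), and any other
polynomial matrix whose rows form a polynomial basis of the same subspace has order
at least the order of `Q`. -/
def IsMinimalBasis {F : Type*} [Field F] {ρ ν : Type*} [Fintype ρ] [Fintype ν]
    (Q : Matrix ρ ν (Polynomial F)) : Prop :=
  LinearIndependent (RatFunc F) (fun i => ratRow (Q i)) ∧
  ∀ (m : ℕ) (R : Matrix (Fin m) ν (Polynomial F)),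
    LinearIndependent (RatFunc F) (fun i => ratRow (R i)) →
    rowSpan R = rowSpan Q → polyOrder Q ≤ polyOrder R

/-! A minimal basis cannot be improved one row at a time: if `p • r = a ᵥ* Q` with `p ≠ 0` and
`a i ≠ 0`, replacing row `i` of `Q` by `r` keeps the rational row span and the independence, so
`deg r ≥ deg Qᵢ`. A dependency `c` among the rows of `Q_h` gives such an `r` of lower degree,
namely `∑ₖ cₖ λ^(dᵢ - dₖ) Qₖ` (its coefficients of degree `dᵢ` cancel), and so does a dependency
among the rows of `Q(λ₀)`: lifted to `F[λ]/(π)`, `π` the minimal polynomial of `λ₀`, it gives `a`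
with `deg aₖ < deg π` and `π ∣ a ᵥ* Q`, and `r = (a ᵥ* Q) / π`.

Conversely, if `Q(λ₀)` has full row rank for every `λ₀`, a polynomial row in the rational span of
`Q` is a polynomial combination of its rows: denominators are divided out one irreducible factor
at a time. So another basis of the span is `R = A * Q` with `det A ≠ 0`, and for a permutation `σ`
with all `A i (σ i) ≠ 0` the predictable degree property (from `Q_h` of full rank) gives
`deg Rᵢ ≥ deg Q_{σ i}`. -/

section LinearAlgebra

theorem Matrix.rank_eq_iff_linearIndependent_row {K ν : Type*} [Field K] [Fintype ν] {m : ℕ}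
    (M : Matrix (Fin m) ν K) : M.rank = m ↔ LinearIndependent K M.row := by
  rw [M.rank_eq_finrank_span_row, linearIndependent_iff_card_eq_finrank_span, Set.finrank,
    Fintype.card_fin, eq_comm]

theorem Matrix.exists_vecMul_eq_zero_of_not_linearIndependent_row {R ρ ν : Type*} [CommRing R]
    [Fintype ρ] {M : Matrix ρ ν R} (h : ¬ LinearIndependent R M.row) :
    ∃ c ≠ 0, c ᵥ* M = 0 := by
  obtain ⟨c, hc, i, hi⟩ := Fintype.not_linearIndependent_iff.mp h
  exact ⟨c, Function.ne_iff.mpr ⟨i, hi⟩, by rwa [vecMul_eq_sum]⟩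

theorem Matrix.ne_zero_of_smul_eq_vecMul {R ρ ν : Type*} [CommRing R] [Fintype ρ]
    {M : Matrix ρ ν R} (hM : LinearIndependent R M.row) {p : R} {a : ρ → R} {i : ρ}
    (hai : a i ≠ 0) {r : ν → R} (h : p • r = a ᵥ* M) : r ≠ 0 := by
  rintro rfl
  have ha : a ᵥ* M = 0 ᵥ* M := by rw [← h, smul_zero, zero_vecMul]
  exact hai (congrFun (Matrix.vecMul_injective_iff.mpr hM ha) i)

theorem Matrix.exists_perm_forall_ne_zero_of_det_ne_zero {R ρ : Type*} [CommRing R] [Fintype ρ]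
    [DecidableEq ρ] {A : Matrix ρ ρ R} (h : A.det ≠ 0) :
    ∃ σ : Equiv.Perm ρ, ∀ i, A i (σ i) ≠ 0 := by
  contrapose! h
  rw [det_apply]
  refine Finset.sum_eq_zero fun σ _ => ?_
  obtain ⟨i, hi⟩ := h σ⁻¹
  rw [Finset.prod_eq_zero (Finset.mem_univ (σ⁻¹ i)) (by simpa using hi), smul_zero]

end LinearAlgebra

section RowDegree

variable {F : Type*} [Field F] {ρ ν : Type*} [Fintype ρ] [Fintype ν]

theorem natDegree_le_rowDegree (v : ν → F[X]) (j : ν) : (v j).natDegree ≤ rowDegree v :=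
  Finset.le_sup (f := fun j => (v j).natDegree) (Finset.mem_univ j)

theorem rowDegree_lt_of_natDegree_lt {v : ν → F[X]} {d : ℕ} (hv : v ≠ 0)
    (h : ∀ j, v j ≠ 0 → (v j).natDegree < d) : rowDegree v < d := by
  obtain ⟨j, hj⟩ := Function.ne_iff.mp hv
  refine (Finset.sup_lt_iff ((Nat.zero_le _).trans_lt (h j hj))).mpr fun k _ => ?_
  by_cases hk : v k = 0
  · rw [hk, natDegree_zero]
    exact (Nat.zero_le _).trans_lt (h j hj)
  · exact h k hk

noncomputable def Matrix.rowLeadingCoeff (Q : Matrix ρ ν F[X]) : Matrix ρ ν F :=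
  Matrix.of fun i j => (Q i j).coeff (rowDegree (Q i))

theorem coeff_vecMul {Q : Matrix ρ ν F[X]} {a : ρ → F[X]} {N : ℕ}
    (h : ∀ k, a k ≠ 0 → (a k).natDegree + rowDegree (Q k) ≤ N) (j : ν) :
    ((a ᵥ* Q) j).coeff N =
      ∑ k, (a k).coeff (N - rowDegree (Q k)) * Q.rowLeadingCoeff k j := by
  simp only [vecMul, dotProduct, finsetSum_coeff]
  refine Finset.sum_congr rfl fun k _ => ?_
  by_cases hak : a k = 0
  · simp [hak]
  have hN := h k hak
  rw [← Nat.sub_add_cancel (le_of_add_le_right hN),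
    coeff_mul_add_eq_of_natDegree_le (by omega) (natDegree_le_rowDegree (Q k) j),
    Nat.add_sub_cancel]
  rfl

theorem natDegree_vecMul_le {Q : Matrix ρ ν F[X]} {a : ρ → F[X]} {N : ℕ}
    (h : ∀ k, a k ≠ 0 → (a k).natDegree + rowDegree (Q k) ≤ N) (j : ν) :
    ((a ᵥ* Q) j).natDegree ≤ N := by
  refine natDegree_sum_le_of_forall_le _ _ fun k _ => ?_
  by_cases hak : a k = 0
  · simp [hak]
  · calc (a k * Q k j).natDegree ≤ (a k).natDegree + (Q k j).natDegree := natDegree_mul_le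
      _ ≤ N := by have := natDegree_le_rowDegree (Q k) j; have := h k hak; omega

theorem exists_coeff_vecMul_ne_zero {Q : Matrix ρ ν F[X]}
    (hQ : LinearIndependent F Q.rowLeadingCoeff.row) {a : ρ → F[X]} {i : ρ} (hai : a i ≠ 0) :
    ∃ j N, ((a ᵥ* Q) j).coeff N ≠ 0 ∧ (a i).natDegree + rowDegree (Q i) ≤ N := by
  -- For `N` the largest `deg aₖ + dₖ`, the coefficient of `λ^N` in `a ᵥ* Q` is `c ᵥ* Q_h`,
  -- where `c ≠ 0` collects the leading coefficients of the `aₖ` attaining `N`.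
  obtain ⟨k₀, hk₀, hmax⟩ := (Function.support a).exists_max_image
    (fun k => (a k).natDegree + rowDegree (Q k)) (Set.toFinite _) ⟨i, hai⟩
  set N := (a k₀).natDegree + rowDegree (Q k₀)
  set c : ρ → F := fun k => (a k).coeff (N - rowDegree (Q k))
  have hc : c ≠ 0 := Function.ne_iff.mpr ⟨k₀, by simpa [c, N] using hk₀⟩
  have hcQ : c ᵥ* Q.rowLeadingCoeff ≠ 0 := by
    simpa using (Matrix.vecMul_injective_iff.mpr hQ).ne hc
  obtain ⟨j, hj⟩ := Function.ne_iff.mp hcQ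
  exact ⟨j, N, by rwa [coeff_vecMul hmax], hmax i hai⟩

theorem linearIndependent_row_of_rowLeadingCoeff {Q : Matrix ρ ν F[X]}
    (hQ : LinearIndependent F Q.rowLeadingCoeff.row) : LinearIndependent F[X] Q.row := by
  refine Fintype.linearIndependent_iff.mpr fun a ha i => ?_
  by_contra hai
  obtain ⟨j, N, hN, -⟩ := exists_coeff_vecMul_ne_zero hQ hai
  have haQ : a ᵥ* Q = 0 := by rw [vecMul_eq_sum]; exact ha
  simp [haQ] at hN

theorem le_rowDegree_vecMul {Q : Matrix ρ ν F[X]}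
    (hQ : LinearIndependent F Q.rowLeadingCoeff.row) {a : ρ → F[X]} {i : ρ} (hai : a i ≠ 0) :
    (a i).natDegree + rowDegree (Q i) ≤ rowDegree (a ᵥ* Q) := by
  obtain ⟨j, N, hN, hle⟩ := exists_coeff_vecMul_ne_zero hQ hai
  exact hle.trans ((le_natDegree_of_ne_zero hN).trans (natDegree_le_rowDegree _ j))

end RowDegree

section RationalRowSpan

variable {F : Type*} [Field F] {ρ ν : Type*}

theorem linearIndependent_ratRow_iff [Finite ν] (Q : Matrix ρ ν F[X]) :
    LinearIndependent (RatFunc F) (fun i => ratRow (Q i)) ↔ LinearIndependent F[X] Q.row :=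
  linearIndependent_algebraMap_comp_iff

theorem ratRow_injective : Function.Injective (ratRow : (ν → F[X]) → ν → RatFunc F) :=
  fun _ _ h => funext fun j => RatFunc.algebraMap_injective F (congrFun h j)

theorem ratRow_smul (p : F[X]) (v : ν → F[X]) :
    ratRow (p • v) = algebraMap F[X] (RatFunc F) p • ratRow v :=
  funext fun _ => map_mul _ _ _

theorem ratRow_vecMul [Fintype ρ] (a : ρ → F[X]) (Q : Matrix ρ ν F[X]) :
    ratRow (a ᵥ* Q) = ∑ k, algebraMap F[X] (RatFunc F) (a k) • ratRow (Q k) := by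
  ext j
  simp only [ratRow, vecMul, dotProduct, map_sum, map_mul, Finset.sum_apply, Pi.smul_apply,
    smul_eq_mul]

theorem ratRow_mem_rowSpan_of_smul_eq_vecMul [Fintype ρ] {Q : Matrix ρ ν F[X]} {v : ν → F[X]}
    {p : F[X]} {a : ρ → F[X]} (hp : p ≠ 0) (h : p • v = a ᵥ* Q) : ratRow v ∈ rowSpan Q := by
  have hv : algebraMap F[X] (RatFunc F) p • ratRow v ∈ rowSpan Q := by
    rw [← ratRow_smul, h, ratRow_vecMul]
    exact Submodule.sum_mem _ fun k _ => Submodule.smul_mem _ _ (Submodule.subset_span ⟨k, rfl⟩)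
  have := Submodule.smul_mem _ (algebraMap F[X] (RatFunc F) p)⁻¹ hv
  rwa [inv_smul_smul₀ (RatFunc.algebraMap_ne_zero hp)] at this

theorem exists_smul_eq_vecMul_of_ratRow_mem_rowSpan [Fintype ρ] {Q : Matrix ρ ν F[X]}
    {v : ν → F[X]} (h : ratRow v ∈ rowSpan Q) :
    ∃ p : F[X], p ≠ 0 ∧ ∃ a : ρ → F[X], p • v = a ᵥ* Q := by
  obtain ⟨g, hg⟩ := (Submodule.mem_span_range_iff_exists_fun (RatFunc F)).mp h
  obtain ⟨⟨p, hp⟩, hpg⟩ :=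
    IsLocalization.exist_integer_multiples_of_finite (nonZeroDivisors F[X]) g
  choose a ha using hpg
  refine ⟨p, nonZeroDivisors.ne_zero hp, a, ratRow_injective ?_⟩
  rw [ratRow_smul, ratRow_vecMul, ← hg, Finset.smul_sum]
  simp only [ha, smul_smul, Algebra.smul_def p]

theorem finrank_rowSpan [Fintype ρ] [Finite ν] {Q : Matrix ρ ν F[X]}
    (hQ : LinearIndependent F[X] Q.row) :
    Module.finrank (RatFunc F) (rowSpan Q) = Fintype.card ρ :=
  finrank_span_eq_card ((linearIndependent_ratRow_iff Q).mpr hQ)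

end RationalRowSpan

section MinimalBasis

variable {F : Type*} [Field F] {ν : Type*} [Fintype ν] {m : ℕ}

theorem IsMinimalBasis.rowDegree_le_of_smul_eq_vecMul {Q : Matrix (Fin m) ν F[X]}
    (hQ : IsMinimalBasis Q) {p : F[X]} (hp : p ≠ 0) {a : Fin m → F[X]} {i : Fin m}
    (hai : a i ≠ 0) {r : ν → F[X]} (h : p • r = a ᵥ* Q) : rowDegree (Q i) ≤ rowDegree r := by
  classical
  have hli := (linearIndependent_ratRow_iff Q).mp hQ.1
  by_contra! hlt
  set R := Q.updateRow i r
  have hRli : LinearIndependent F[X] R.row := by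
    refine hli.update i r ⟨p, mem_nonZeroDivisors_of_ne_zero hp,
      (Finsupp.linearEquivFunOnFinite F[X] F[X] _).symm a, mem_nonZeroDivisors_of_ne_zero hai, ?_⟩
    rw [h, vecMul_eq_sum, Finsupp.linearCombination_eq_fintype_linearCombination_apply,
      Fintype.linearCombination_apply]
    rfl
  have hspan : rowSpan R = rowSpan Q := by
    refine Submodule.eq_of_le_of_finrank_eq (Submodule.span_le.mpr ?_) ?_
    · rintro _ ⟨k, rfl⟩
      rcases eq_or_ne k i with rfl | hk
      · simp only [R, updateRow_self]
        exact ratRow_mem_rowSpan_of_smul_eq_vecMul hp h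
      · simp only [R, updateRow_ne hk]
        exact Submodule.subset_span ⟨k, rfl⟩
    · rw [finrank_rowSpan hRli, finrank_rowSpan hli]
  have horder : polyOrder R < polyOrder Q := by
    refine Finset.sum_lt_sum (fun k _ => ?_) ⟨i, Finset.mem_univ i, by simpa [R] using hlt⟩
    rcases eq_or_ne k i with rfl | hk
    · simpa [R] using hlt.le
    · simp [R, hk]
  exact (hQ.2 m R ((linearIndependent_ratRow_iff R).mpr hRli) hspan).not_gt horder

theorem IsMinimalBasis.exists_rowDegree_le_natDegree {Q : Matrix (Fin m) ν F[X]}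
    (hQ : IsMinimalBasis Q) {p : F[X]} (hp : p ≠ 0) {a : Fin m → F[X]} {i : Fin m}
    (hai : a i ≠ 0) {r : ν → F[X]} (h : p • r = a ᵥ* Q) :
    ∃ j, r j ≠ 0 ∧ rowDegree (Q i) ≤ (r j).natDegree := by
  by_contra! hr
  have hr0 := ne_zero_of_smul_eq_vecMul ((linearIndependent_ratRow_iff Q).mp hQ.1) hai h
  exact (hQ.rowDegree_le_of_smul_eq_vecMul hp hai h).not_gt (rowDegree_lt_of_natDegree_lt hr0 hr)

theorem IsMinimalBasis.linearIndependent_rowLeadingCoeff {Q : Matrix (Fin m) ν F[X]}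
    (hQ : IsMinimalBasis Q) : LinearIndependent F Q.rowLeadingCoeff.row := by
  by_contra hdep
  obtain ⟨c, hc0, hc⟩ := exists_vecMul_eq_zero_of_not_linearIndependent_row hdep
  obtain ⟨i, hci, hmax⟩ := (Function.support c).exists_max_image (fun k => rowDegree (Q k))
    (Set.toFinite _) (Function.support_nonempty_iff.mpr hc0)
  set a : Fin m → F[X] := fun k => C (c k) * X ^ (rowDegree (Q i) - rowDegree (Q k))
  have hai : a i ≠ 0 := by simpa [a] using hci
  obtain ⟨j, hj0, hj⟩ := hQ.exists_rowDegree_le_natDegree one_ne_zero hai (one_smul _ _)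
  have hcoeff : ∀ t, rowDegree (Q i) ≤ t → ((a ᵥ* Q) j).coeff t = 0 := by
    intro t ht
    have ha : ∀ k, (a k).coeff (t - rowDegree (Q k)) =
        if t = rowDegree (Q i) then c k else 0 := by
      intro k
      by_cases hck : c k = 0
      · simp [a, hck]
      · have := hmax k hck
        simp only [a, coeff_C_mul_X_pow]
        exact if_congr (by omega) rfl rfl
    have hdeg : ∀ k, a k ≠ 0 → (a k).natDegree + rowDegree (Q k) ≤ t := by
      intro k hak
      have hck : c k ≠ 0 := by rintro h; simp [a, h] at hak
      have := hmax k hck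
      simp only [a, natDegree_C_mul_X_pow _ _ hck]
      omega
    rw [coeff_vecMul hdeg, Finset.sum_congr rfl fun k _ => by rw [ha k]]
    split_ifs
    · exact congrFun hc j
    · simp
  exact hj0 (leadingCoeff_eq_zero.mp (hcoeff _ hj))

theorem IsMinimalBasis.linearIndependent_map_aeval {Q : Matrix (Fin m) ν F[X]}
    (hQ : IsMinimalBasis Q) {L : Type*} [Field L] [Algebra F L] {x : L} (hx : IsIntegral F x) :
    LinearIndependent L (Q.map (aeval x)).row := by
  set π := minpoly F x
  have : Fact (Irreducible π) := ⟨minpoly.irreducible hx⟩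
  -- `Q(x)` is the image of `Q mod π` under the embedding `F[X]/(π) → L`.
  let : Algebra (AdjoinRoot π) L :=
    (AdjoinRoot.lift (algebraMap F L) x (minpoly.aeval F x)).toAlgebra
  have hmap : (Q.map (aeval x)).row =
      fun k => algebraMap (AdjoinRoot π) L ∘ (Q.map (AdjoinRoot.mk π)).row k := by
    ext k j
    simp only [row, map_apply, Function.comp_apply, RingHom.algebraMap_toAlgebra, aeval_def]
    exact (AdjoinRoot.lift_mk _ _).symm
  rw [hmap, linearIndependent_algebraMap_comp_iff]
  by_contra hdep
  obtain ⟨c, hc0, hc⟩ := exists_vecMul_eq_zero_of_not_linearIndependent_row hdep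
  have hπ : π.Monic := minpoly.monic hx
  set a : Fin m → F[X] := fun k => AdjoinRoot.modByMonicHom hπ (c k)
  have hmk : ∀ k, AdjoinRoot.mk π (a k) = c k := fun k => AdjoinRoot.mk_leftInverse hπ (c k)
  have hadeg : ∀ k, (a k).natDegree < π.natDegree := fun k => by
    obtain ⟨u, hu⟩ := AdjoinRoot.mk_surjective (c k)
    simpa [a, ← hu] using natDegree_modByMonic_lt u hπ (minpoly.ne_one F x)
  have ha0 : a ≠ 0 := fun h =>
    hc0 (funext fun k => by rw [← hmk k, h, Pi.zero_apply, map_zero]; rfl)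
  obtain ⟨i, hai, hmax⟩ := (Function.support a).exists_max_image (fun k => rowDegree (Q k))
    (Set.toFinite _) (Function.support_nonempty_iff.mpr ha0)
  have hdvd : ∀ j, π ∣ (a ᵥ* Q) j := fun j => by
    rw [← AdjoinRoot.mk_eq_zero, RingHom.map_vecMul, show AdjoinRoot.mk π ∘ a = c from funext hmk,
      hc, Pi.zero_apply]
  choose r hr using hdvd
  obtain ⟨j, hrj, hj⟩ := hQ.exists_rowDegree_le_natDegree (minpoly.ne_zero hx) hai
    (funext fun j => (hr j).symm)
  have hdeg : ((a ᵥ* Q) j).natDegree ≤ π.natDegree - 1 + rowDegree (Q i) :=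
    natDegree_vecMul_le (fun k hk => by have := hadeg k; have := hmax k hk; omega) j
  have hπpos : 0 < π.natDegree := minpoly.natDegree_pos hx
  have hπ0 : π ≠ 0 := minpoly.ne_zero hx
  rw [hr j, natDegree_mul hπ0 hrj] at hdeg
  omega

end MinimalBasis

theorem exists_vecMul_eq_of_smul_eq_vecMul {F : Type*} [Field F] {ρ ν : Type*} [Fintype ρ]
    {L : Type*} [Field L] [Algebra F L] [IsAlgClosed L] {Q : Matrix ρ ν F[X]}
    (hQ : ∀ x : L, LinearIndependent L (Q.map (aeval x)).row) {v : ν → F[X]} {p : F[X]}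
    (hp : p ≠ 0) {a : ρ → F[X]} (h : p • v = a ᵥ* Q) : ∃ b : ρ → F[X], v = b ᵥ* Q := by
  induction p using WfDvdMonoid.induction_on_irreducible generalizing a with
  | zero => exact absurd rfl hp
  | unit u hu =>
    exact ⟨(↑hu.unit⁻¹ : F[X]) • a, by rw [smul_vecMul, ← h, smul_smul, hu.val_inv_mul, one_smul]⟩
  | mul p q hp0 hq ih =>
    obtain ⟨x, hx⟩ := IsAlgClosed.exists_aeval_eq_zero L q (degree_pos_of_irreducible hq).ne'
    have hax : aeval x ∘ a = 0 := by
      have : (aeval x ∘ a) ᵥ* Q.map (aeval x) = 0 := funext fun j => by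
        rw [← AlgHom.coe_toRingHom, ← RingHom.map_vecMul, ← h]
        simp [hx]
      exact Matrix.vecMul_injective_iff.mpr (hQ x) (this.trans (zero_vecMul _).symm)
    have hqa : ∀ k, q ∣ a k := fun k =>
      (Dvd.intro _ (minpoly.eq_of_irreducible hq hx)).trans (minpoly.dvd F x (congrFun hax k))
    choose a' ha' using hqa
    refine ih hp0 (a := a') (smul_right_injective _ hq.ne_zero ?_)
    change q • p • v = q • a' ᵥ* Q
    rw [smul_smul, h, ← smul_vecMul]
    exact congrArg (· ᵥ* Q) (funext ha')

theorem IsMinimalBasis.of_linearIndependent {F : Type*} [Field F] {ν : Type*} [Fintype ν]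
    {L : Type*} [Field L] [Algebra F L] [IsAlgClosed L] {m : ℕ} {Q : Matrix (Fin m) ν F[X]}
    (hQ : ∀ x : L, LinearIndependent L (Q.map (aeval x)).row)
    (hQh : LinearIndependent F Q.rowLeadingCoeff.row) : IsMinimalBasis Q := by
  classical
  have hli := linearIndependent_row_of_rowLeadingCoeff hQh
  refine ⟨(linearIndependent_ratRow_iff Q).mpr hli, fun m' R hR hspan => ?_⟩
  have hRli := (linearIndependent_ratRow_iff R).mp hR
  obtain rfl : m' = m := by
    have h := finrank_rowSpan hRli
    rwa [hspan, finrank_rowSpan hli, Fintype.card_fin, Fintype.card_fin, eq_comm] at h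
  have hA : ∀ i, ∃ b, R i = b ᵥ* Q := fun i => by
    have hi : ratRow (R i) ∈ rowSpan Q := hspan ▸ Submodule.subset_span ⟨i, rfl⟩
    obtain ⟨p, hp, a, h⟩ := exists_smul_eq_vecMul_of_ratRow_mem_rowSpan hi
    exact exists_vecMul_eq_of_smul_eq_vecMul hQ hp h
  choose A hA using hA
  have hdet : (of A).det ≠ 0 := by
    intro h0
    obtain ⟨c, hc0, hc⟩ := exists_vecMul_eq_zero_iff.mpr h0
    refine hc0 (Matrix.vecMul_injective_iff.mpr hRli ?_)
    have hRA : R = of A * Q := by ext i j; rw [hA i]; rfl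
    change c ᵥ* R = 0 ᵥ* R
    rw [hRA, ← vecMul_vecMul, hc, zero_vecMul, zero_vecMul]
  obtain ⟨σ, hσ⟩ := exists_perm_forall_ne_zero_of_det_ne_zero hdet
  calc polyOrder Q = ∑ i, rowDegree (Q (σ i)) := (Equiv.sum_comp σ _).symm
    _ ≤ ∑ i, rowDegree (R i) := Finset.sum_le_sum fun i _ => by
        rw [hA i]
        exact le_add_self.trans (le_rowDegree_vecMul hQh (hσ i))
    _ = polyOrder R := rfl

/-- Theorem 2.2: `Q(λ)` is a minimal basis if and only if `Q(λ₀)` has full row rank for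
every `λ₀` in the algebraic closure of `F` and the highest row degree coefficient matrix
of `Q(λ)` has full row rank. -/
theorem isMinimalBasis_iff_fullRank (F : Type*) [Field F] (m n : ℕ)
    (Q : Matrix (Fin m) (Fin n) (Polynomial F)) :
    IsMinimalBasis Q ↔
      ((∀ x : AlgebraicClosure F, (Q.map fun p => Polynomial.aeval x p).rank = m) ∧
        (Matrix.of fun i j => (Q i j).coeff (rowDegree (Q i)) :
          Matrix (Fin m) (Fin n) F).rank = m) := by
  simp only [rank_eq_iff_linearIndependent_row]
  exact ⟨fun hQ => ⟨fun x => hQ.linearIndependent_map_aeval (Algebra.IsIntegral.isIntegral x),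
    hQ.linearIndependent_rowLeadingCoeff⟩, fun ⟨hQ, hQh⟩ => .of_linearIndependent hQ hQh⟩
end

section
/- Let K(λ) be a minimal-basis (s1,n)-wing pencil partitioned as K(λ) = [K_1(λ) | k(λ)] with K_1(λ) ∈ F[λ]^{s1 n × s1 n}, and let L(λ) be a minimal-basis (s2,n)-wing pencil partitioned as L(λ) = [ℓ(λ) | L_1(λ)] with L_1(λ) ∈ F[λ]^{s2 n × s2 n}. Then the pencil S(λ) with block rows [K_1(λ), k(λ), 0] and [0, ℓ(λ), L_1(λ)] is a minimal-basis (s1+s2, n)-wing pencil. -/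
open Polynomial Matrix

/-- The pencil `L_s(λ)` with `-1` on the diagonal and `λ` on the superdiagonal. -/
noncomputable def Lpoly (F : Type*) [Field F] (s : ℕ) :
    Matrix (Fin s) (Fin (s+1)) (Polynomial F) :=
  Matrix.of fun i j =>
    if (j : ℕ) = (i : ℕ) then -1 else if (j : ℕ) = (i : ℕ) + 1 then X else 0

/-- The row vector `Λ_s(λ) = [λ^s, λ^{s-1}, ..., λ, 1]`. -/
noncomputable def LamPoly (F : Type*) [Field F] (s : ℕ) :
    Matrix (Fin 1) (Fin (s+1)) (Polynomial F) :=
  Matrix.of fun _ j => X ^ (s - (j : ℕ))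

open Kronecker

/-- The pencil `S(λ)` with block rows `[K₁(λ), k(λ), 0]` and `[0, ℓ(λ), L₁(λ)]`, obtained
by glueing a wing pencil `K(λ) = [K₁(λ) | k(λ)]` and a wing pencil `L(λ) = [ℓ(λ) | L₁(λ)]`
along their last/first block-columns. -/
noncomputable def concatWing (F : Type*) [Field F] (s1 s2 n : ℕ)
    (K : Matrix (Fin s1 × Fin n) (Fin (s1+1) × Fin n) (Polynomial F))
    (L : Matrix (Fin s2 × Fin n) (Fin (s2+1) × Fin n) (Polynomial F)) :
    Matrix (Fin (s1+s2) × Fin n) (Fin (s1+s2+1) × Fin n) (Polynomial F) :=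
  Matrix.of fun rc cc =>
    if hr : (rc.1 : ℕ) < s1 then
      if hc : (cc.1 : ℕ) ≤ s1 then
        K (⟨rc.1, hr⟩, rc.2) (⟨cc.1, by omega⟩, cc.2)
      else 0
    else
      if hc : s1 ≤ (cc.1 : ℕ) then
        L (⟨(rc.1 : ℕ) - s1, by have := rc.1.isLt; omega⟩, rc.2)
          (⟨(cc.1 : ℕ) - s1, by have := cc.1.isLt; omega⟩, cc.2)
      else 0


section Helpers
set_option synthInstance.maxHeartbeats 1000000
set_option maxHeartbeats 1000000

variable {F : Type*} [Field F]

lemma wing_iff {s n : ℕ} (M : Matrix (Fin s × Fin n) (Fin (s+1) × Fin n) (Polynomial F)) :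
    M * ((LamPoly F s)ᵀ ⊗ₖ (1 : Matrix (Fin n) (Fin n) (Polynomial F))) = 0 ↔
    ∀ r j, ∑ c : Fin (s+1), M r (c, j) * X ^ (s - (c:ℕ)) = 0 := by
  constructor
  · intro h r j
    have h0 := congrFun (congrFun h r) ((0 : Fin 1), j)
    simp only [Matrix.mul_apply, Matrix.zero_apply, Fintype.sum_prod_type,
      Matrix.kroneckerMap_apply, Matrix.transpose_apply, LamPoly, Matrix.of_apply,
      Matrix.one_apply, mul_ite, mul_one, mul_zero, Finset.sum_ite_eq',
      Finset.mem_univ, if_true] at h0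
    exact h0
  · intro h
    refine Matrix.ext fun r q => ?_
    obtain ⟨u, j⟩ := q
    simp only [Matrix.mul_apply, Matrix.zero_apply, Fintype.sum_prod_type,
      Matrix.kroneckerMap_apply, Matrix.transpose_apply, LamPoly, Matrix.of_apply,
      Matrix.one_apply, mul_ite, mul_one, mul_zero, Finset.sum_ite_eq',
      Finset.mem_univ, if_true]
    exact h r j

lemma const_row_zero {s n : ℕ} (v : Fin (s+1) × Fin n → Polynomial F)
    (h : ∀ j, ∑ c : Fin (s+1), v (c, j) * X ^ (s - (c:ℕ)) = 0)
    (hd : rowDegree v = 0) : v = 0 := by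
  have hdeg : ∀ cc, (v cc).natDegree = 0 := by
    intro cc
    have h1 : (v cc).natDegree ≤ rowDegree v :=
      Finset.le_sup (f := fun j => (v j).natDegree) (Finset.mem_univ cc)
    omega
  have hC : ∀ cc, v cc = C ((v cc).coeff 0) := fun cc => (eq_C_of_natDegree_eq_zero (hdeg cc))
  funext cc
  obtain ⟨c0, j⟩ := cc
  have hj := congrArg (fun p => p.coeff (s - (c0:ℕ))) (h j)
  simp only [finset_sum_coeff, coeff_zero] at hj
  have : ∀ c : Fin (s+1), (v (c,j) * X ^ (s - (c:ℕ))).coeff (s - (c0:ℕ)) =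
      if c = c0 then (v (c0,j)).coeff 0 else 0 := by
    intro c
    rw [hC (c,j), coeff_C_mul, coeff_X_pow]
    have hc := c.isLt
    have hc0 := c0.isLt
    by_cases hcc : c = c0
    · subst hcc; simp
    · have : ¬ (s - (c0:ℕ) = s - (c:ℕ)) := by
        intro he
        apply hcc
        apply Fin.ext
        omega
      simp [this, hcc]
  rw [Finset.sum_congr rfl (fun c _ => this c)] at hj
  simp only [Finset.sum_ite_eq', Finset.mem_univ, if_true] at hj
  rw [hC (c0, j), hj]
  simp

lemma span_ker {s n : ℕ} {ρ : Type*} [Fintype ρ]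
    (M : Matrix ρ (Fin (s+1) × Fin n) (Polynomial F))
    (h : ∀ r j, ∑ c : Fin (s+1), M r (c, j) * X ^ (s - (c:ℕ)) = 0)
    (v : Fin (s+1) × Fin n → RatFunc F) (hv : v ∈ rowSpan M) (j : Fin n) :
    ∑ c : Fin (s+1), v (c, j) * (algebraMap (Polynomial F) (RatFunc F) (X ^ (s - (c:ℕ)))) = 0 := by
  induction hv using Submodule.span_induction with
  | mem x hx =>
    obtain ⟨r, rfl⟩ := hx
    have := congrArg (algebraMap (Polynomial F) (RatFunc F)) (h r j)
    simpa only [map_sum, _root_.map_mul, map_zero, ratRow] using this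
  | zero => simp
  | add x y _ _ hx hy =>
    simp only [Pi.add_apply, add_mul, Finset.sum_add_distrib, hx, hy, add_zero]
  | smul a x _ hx =>
    have he : ∀ cc, (a • x) cc = a * x cc := fun _ => rfl
    simp only [he, mul_assoc, ← Finset.mul_sum, hx, mul_zero]

variable {s1 s2 n : ℕ}
  (K : Matrix (Fin s1 × Fin n) (Fin (s1+1) × Fin n) (Polynomial F))
  (L : Matrix (Fin s2 × Fin n) (Fin (s2+1) × Fin n) (Polynomial F))

lemma conc1 (i : Fin s1) (p : Fin n) (d : Fin (s1+s2+1)) (hd : (d:ℕ) ≤ s1) (j : Fin n) :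
    concatWing F s1 s2 n K L (Fin.castAdd s2 i, p) (d, j) = K (i, p) (⟨d, by omega⟩, j) := by
  have hi : ((Fin.castAdd s2 i : Fin (s1+s2)) : ℕ) < s1 := i.isLt
  simp only [concatWing, Matrix.of_apply, dif_pos hi, dif_pos hd]
  rfl

lemma conc2 (i : Fin s1) (p : Fin n) (d : Fin (s1+s2+1)) (hd : s1 < (d:ℕ)) (j : Fin n) :
    concatWing F s1 s2 n K L (Fin.castAdd s2 i, p) (d, j) = 0 := by
  have hi : ((Fin.castAdd s2 i : Fin (s1+s2)) : ℕ) < s1 := i.isLt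
  simp only [concatWing, Matrix.of_apply, dif_pos hi, dif_neg (by omega : ¬ (d:ℕ) ≤ s1)]

lemma conc3 (i : Fin s2) (p : Fin n) (d : Fin (s1+s2+1)) (hd : s1 ≤ (d:ℕ)) (j : Fin n) :
    concatWing F s1 s2 n K L (Fin.natAdd s1 i, p) (d, j) =
      L (i, p) (⟨(d:ℕ) - s1, by have := d.isLt; omega⟩, j) := by
  have hi : ¬ ((Fin.natAdd s1 i : Fin (s1+s2)) : ℕ) < s1 := by simp [Fin.natAdd]
  simp only [concatWing, Matrix.of_apply, dif_neg hi, dif_pos hd]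
  congr 1
  exact congrArg (fun t => (t, p)) (Fin.ext (by simp [Fin.natAdd]))

lemma conc4 (i : Fin s2) (p : Fin n) (d : Fin (s1+s2+1)) (hd : (d:ℕ) < s1) (j : Fin n) :
    concatWing F s1 s2 n K L (Fin.natAdd s1 i, p) (d, j) = 0 := by
  have hi : ¬ ((Fin.natAdd s1 i : Fin (s1+s2)) : ℕ) < s1 := by simp [Fin.natAdd]
  simp only [concatWing, Matrix.of_apply, dif_neg hi, dif_neg (by omega : ¬ s1 ≤ (d:ℕ))]

lemma concat_li
    (hKw : ∀ r j, ∑ c : Fin (s1+1), K r (c, j) * X ^ (s1 - (c:ℕ)) = 0)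
    (hKli : LinearIndependent (RatFunc F) (fun i => ratRow (K i)))
    (hLli : LinearIndependent (RatFunc F) (fun i => ratRow (L i))) :
    LinearIndependent (RatFunc F) (fun i => ratRow ((concatWing F s1 s2 n K L) i)) := by
  classical
  set S := concatWing F s1 s2 n K L with hS
  rw [Fintype.linearIndependent_iff]
  intro g hg
  set alg := algebraMap (Polynomial F) (RatFunc F) with halg
  have hgc : ∀ cc : Fin (s1+s2+1) × Fin n, ∑ r : Fin (s1+s2) × Fin n,
      g r * alg (S r cc) = 0 := by
    intro cc
    have := congrFun hg cc
    simpa [Finset.sum_apply, Pi.smul_apply, smul_eq_mul, ratRow] using this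
  set gK : Fin s1 × Fin n → RatFunc F := fun rp => g (Fin.castAdd s2 rp.1, rp.2) with hgKdef
  set gL : Fin s2 × Fin n → RatFunc F := fun rp => g (Fin.natAdd s1 rp.1, rp.2) with hgLdef
  -- split sums
  have hsplit : ∀ cc : Fin (s1+s2+1) × Fin n,
      (∑ rp : Fin s1 × Fin n, gK rp * alg (S (Fin.castAdd s2 rp.1, rp.2) cc)) +
      (∑ rp : Fin s2 × Fin n, gL rp * alg (S (Fin.natAdd s1 rp.1, rp.2) cc)) = 0 := by
    intro cc
    rw [← hgc cc]
    rw [Fintype.sum_prod_type, Fintype.sum_prod_type, Fintype.sum_prod_type,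
      ← Fin.sum_univ_add (f := fun i => ∑ p, g (i, p) * alg (S (i, p) cc))]
  -- A : the K-part linear combination, per column
  have hA1 : ∀ (c : Fin (s1+1)), (c:ℕ) < s1 → ∀ j : Fin n,
      ∑ rp : Fin s1 × Fin n, gK rp * alg (K rp (c, j)) = 0 := by
    intro c hc j
    have hcd : (c:ℕ) < s1 + s2 + 1 := by omega
    set d : Fin (s1+s2+1) := ⟨(c:ℕ), hcd⟩ with hddef
    have hdc : (d:ℕ) = (c:ℕ) := rfl
    have h := hsplit (d, j)
    have e2 : (∑ rp : Fin s2 × Fin n, gL rp * alg (S (Fin.natAdd s1 rp.1, rp.2) (d, j))) = 0 :=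
      Finset.sum_eq_zero fun rp _ => by
        rw [hS, conc4 K L rp.1 rp.2 d (by omega) j, map_zero, mul_zero]
    have e1 : (∑ rp : Fin s1 × Fin n, gK rp * alg (S (Fin.castAdd s2 rp.1, rp.2) (d, j))) =
        ∑ rp : Fin s1 × Fin n, gK rp * alg (K rp (c, j)) :=
      Finset.sum_congr rfl fun rp _ => by
        rw [hS, conc1 K L rp.1 rp.2 d (by omega) j]
    rw [e1, e2, add_zero] at h
    exact h
  set w : Fin (s1+1) → RatFunc F := fun c => alg (X ^ (s1 - (c:ℕ))) with hw
  have hAker : ∀ j : Fin n, ∑ c : Fin (s1+1),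
      (∑ rp : Fin s1 × Fin n, gK rp * alg (K rp (c, j))) * w c = 0 := by
    intro j
    have e : ∀ c : Fin (s1+1), (∑ rp : Fin s1 × Fin n, gK rp * alg (K rp (c, j))) * w c
        = ∑ rp : Fin s1 × Fin n, gK rp * alg (K rp (c, j) * X ^ (s1 - (c:ℕ))) := by
      intro c
      rw [Finset.sum_mul]
      exact Finset.sum_congr rfl fun rp _ => by rw [_root_.map_mul, mul_assoc]
    rw [Finset.sum_congr rfl fun c _ => e c, Finset.sum_comm]
    refine Finset.sum_eq_zero fun rp _ => ?_
    rw [← Finset.mul_sum, ← map_sum, hKw rp j, map_zero, mul_zero]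
  have hA : ∀ (c : Fin (s1+1)) (j : Fin n),
      ∑ rp : Fin s1 × Fin n, gK rp * alg (K rp (c, j)) = 0 := by
    intro c j
    by_cases hc : (c:ℕ) < s1
    · exact hA1 c hc j
    · have hcl : c = Fin.last s1 := Fin.ext (by have := c.isLt; simp [Fin.last]; omega)
      subst hcl
      have h := hAker j
      rw [Finset.sum_eq_single (Fin.last s1)] at h
      · simpa [hw, Fin.last] using h
      · intro b _ hb
        have hb' : (b:ℕ) < s1 := by
          have h1 := b.isLt
          have h2 : (b:ℕ) ≠ s1 := fun he => hb (Fin.ext (by simp [Fin.last, he]))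
          omega
        rw [hA1 b hb' j, zero_mul]
      · intro hmem; exact absurd (Finset.mem_univ _) hmem
  have hgK0 : ∀ rp, gK rp = 0 := by
    have hsum : ∑ rp : Fin s1 × Fin n, gK rp • ratRow (K rp) = 0 := by
      funext cc
      obtain ⟨c, j⟩ := cc
      have := hA c j
      simpa [Finset.sum_apply, Pi.smul_apply, smul_eq_mul, ratRow] using this
    exact Fintype.linearIndependent_iff.mp hKli gK hsum
  have hB : ∀ (c : Fin (s2+1)) (j : Fin n),
      ∑ rp : Fin s2 × Fin n, gL rp * alg (L rp (c, j)) = 0 := by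
    intro c j
    have hcd : s1 + (c:ℕ) < s1+s2+1 := by have := c.isLt; omega
    set d : Fin (s1+s2+1) := ⟨s1 + (c:ℕ), hcd⟩ with hddef
    have hdc : (d:ℕ) = s1 + (c:ℕ) := rfl
    have h := hsplit (d, j)
    have e1 : (∑ rp : Fin s1 × Fin n, gK rp * alg (S (Fin.castAdd s2 rp.1, rp.2) (d, j))) = 0 :=
      Finset.sum_eq_zero fun rp _ => by rw [hgK0 rp, zero_mul]
    have hind : ∀ (hp : (d:ℕ) - s1 < s2+1), (⟨(d:ℕ) - s1, hp⟩ : Fin (s2+1)) = c :=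
      fun hp => Fin.ext (by show (d:ℕ) - s1 = (c:ℕ); omega)
    have e2 : (∑ rp : Fin s2 × Fin n, gL rp * alg (S (Fin.natAdd s1 rp.1, rp.2) (d, j))) =
        ∑ rp : Fin s2 × Fin n, gL rp * alg (L rp (c, j)) :=
      Finset.sum_congr rfl fun rp _ => by
        rw [hS, conc3 K L rp.1 rp.2 d (by omega) j, hind]
    rw [e1, e2, zero_add] at h
    exact h
  have hgL0 : ∀ rp, gL rp = 0 := by
    have hsum : ∑ rp : Fin s2 × Fin n, gL rp • ratRow (L rp) = 0 := by
      funext cc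
      obtain ⟨c, j⟩ := cc
      have := hB c j
      simpa [Finset.sum_apply, Pi.smul_apply, smul_eq_mul, ratRow] using this
    exact Fintype.linearIndependent_iff.mp hLli gL hsum
  intro r
  obtain ⟨i, p⟩ := r
  by_cases hi : (i:ℕ) < s1
  · have he : ((i : Fin (s1+s2)), p) = (Fin.castAdd s2 ⟨(i:ℕ), hi⟩, p) :=
      Prod.ext (Fin.ext rfl) rfl
    rw [he]
    exact hgK0 (⟨(i:ℕ), hi⟩, p)
  · have hi2 : (i:ℕ) - s1 < s2 := by have := i.isLt; omega
    have he : ((i : Fin (s1+s2)), p) = (Fin.natAdd s1 ⟨(i:ℕ) - s1, hi2⟩, p) :=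
      Prod.ext (Fin.ext (by simp [Fin.natAdd]; omega)) rfl
    rw [he]
    exact hgL0 (⟨(i:ℕ) - s1, hi2⟩, p)

lemma concat_wing
    (hKw : ∀ r j, ∑ c : Fin (s1+1), K r (c, j) * X ^ (s1 - (c:ℕ)) = 0)
    (hLw : ∀ r j, ∑ c : Fin (s2+1), L r (c, j) * X ^ (s2 - (c:ℕ)) = 0) :
    ∀ r j, ∑ c : Fin (s1+s2+1),
      concatWing F s1 s2 n K L r (c, j) * X ^ (s1 + s2 - (c:ℕ)) = 0 := by
  rintro ⟨i, p⟩ j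
  by_cases hi : (i:ℕ) < s1
  · have he : ((i : Fin (s1+s2)), p) = (Fin.castAdd s2 ⟨(i:ℕ), hi⟩, p) :=
      Prod.ext (Fin.ext rfl) rfl
    simp only [he]
    set ι : Fin (s1+1) → Fin (s1+s2+1) := fun c => ⟨(c:ℕ), by have := c.isLt; omega⟩ with hι
    have hinj : Function.Injective ι := fun a b hab =>
      Fin.ext (by have := congrArg Fin.val hab; simp only [hι] at this; omega)
    have hzero : ∀ x ∈ Finset.univ, x ∉ Finset.univ.image ι →
        concatWing F s1 s2 n K L (Fin.castAdd s2 ⟨(i:ℕ), hi⟩, p) (x, j)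
          * X ^ (s1 + s2 - (x:ℕ)) = 0 := by
      intro x _ hx
      have hxs : ¬ (x:ℕ) ≤ s1 := by
        intro hle
        exact hx (Finset.mem_image.mpr ⟨⟨(x:ℕ), by omega⟩, Finset.mem_univ _, Fin.ext rfl⟩)
      rw [conc2 K L _ p x (by omega) j, zero_mul]
    rw [← Finset.sum_subset (Finset.subset_univ (Finset.univ.image ι)) hzero,
      Finset.sum_image (fun a _ b _ hab => hinj hab)]
    have hterm : ∀ c : Fin (s1+1),
        concatWing F s1 s2 n K L (Fin.castAdd s2 ⟨(i:ℕ), hi⟩, p) (ι c, j)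
          * X ^ (s1 + s2 - ((ι c):ℕ)) =
        (K (⟨(i:ℕ), hi⟩, p) (c, j) * X ^ (s1 - (c:ℕ))) * X ^ s2 := by
      intro c
      rw [conc1 K L _ p (ι c) (by show (c:ℕ) ≤ s1; have := c.isLt; omega) j,
        mul_assoc, ← pow_add]
      congr 2
      show s1 + s2 - (c:ℕ) = s1 - (c:ℕ) + s2
      have := c.isLt; omega
    rw [Finset.sum_congr rfl fun c _ => hterm c, ← Finset.sum_mul, hKw, zero_mul]
  · have hi2 : (i:ℕ) - s1 < s2 := by have := i.isLt; omega
    have he : ((i : Fin (s1+s2)), p) = (Fin.natAdd s1 ⟨(i:ℕ) - s1, hi2⟩, p) :=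
      Prod.ext (Fin.ext (by simp [Fin.natAdd]; omega)) rfl
    simp only [he]
    set ι : Fin (s2+1) → Fin (s1+s2+1) := fun c => ⟨s1 + (c:ℕ), by have := c.isLt; omega⟩ with hι
    have hinj : Function.Injective ι := fun a b hab =>
      Fin.ext (by have := congrArg Fin.val hab; simp only [hι] at this; omega)
    have hzero : ∀ x ∈ Finset.univ, x ∉ Finset.univ.image ι →
        concatWing F s1 s2 n K L (Fin.natAdd s1 ⟨(i:ℕ) - s1, hi2⟩, p) (x, j)
          * X ^ (s1 + s2 - (x:ℕ)) = 0 := by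
      intro x _ hx
      have hxs : ¬ s1 ≤ (x:ℕ) := by
        intro hle
        refine hx (Finset.mem_image.mpr ⟨⟨(x:ℕ) - s1, by have := x.isLt; omega⟩,
          Finset.mem_univ _, Fin.ext ?_⟩)
        show s1 + ((x:ℕ) - s1) = (x:ℕ); omega
      rw [conc4 K L _ p x (by omega) j, zero_mul]
    rw [← Finset.sum_subset (Finset.subset_univ (Finset.univ.image ι)) hzero,
      Finset.sum_image (fun a _ b _ hab => hinj hab)]
    have hterm : ∀ c : Fin (s2+1),
        concatWing F s1 s2 n K L (Fin.natAdd s1 ⟨(i:ℕ) - s1, hi2⟩, p) (ι c, j)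
          * X ^ (s1 + s2 - ((ι c):ℕ)) =
        L (⟨(i:ℕ) - s1, hi2⟩, p) (c, j) * X ^ (s2 - (c:ℕ)) := by
      intro c
      rw [conc3 K L _ p (ι c) (by show s1 ≤ s1 + (c:ℕ); omega) j]
      have hind : ∀ (hp : ((ι c):ℕ) - s1 < s2+1), (⟨((ι c):ℕ) - s1, hp⟩ : Fin (s2+1)) = c :=
        fun hp => Fin.ext (by show s1 + (c:ℕ) - s1 = (c:ℕ); omega)
      rw [hind]
      congr 1
      show X ^ (s1 + s2 - (s1 + (c:ℕ))) = X ^ (s2 - (c:ℕ))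
      congr 1
      omega
    rw [Finset.sum_congr rfl fun c _ => hterm c, hLw]

end Helpers

/-- If `K(λ)` is a minimal-basis `(s₁,n)`-wing pencil and `L(λ)` is a minimal-basis
`(s₂,n)`-wing pencil, then the pencil `S(λ) = [[K₁(λ), k(λ), 0], [0, ℓ(λ), L₁(λ)]]`
is a minimal-basis `(s₁+s₂,n)`-wing pencil. -/

theorem concatWing_minimal_basis_wing (F : Type*) [Field F] (s1 s2 n : ℕ)
    (K : Matrix (Fin s1 × Fin n) (Fin (s1+1) × Fin n) (Polynomial F))
    (L : Matrix (Fin s2 × Fin n) (Fin (s2+1) × Fin n) (Polynomial F))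
    (hKpencil : ∀ r c, (K r c).natDegree ≤ 1)
    (hKwing : K * ((LamPoly F s1)ᵀ ⊗ₖ (1 : Matrix (Fin n) (Fin n) (Polynomial F))) = 0)
    (hKmin : IsMinimalBasis K)
    (hLpencil : ∀ r c, (L r c).natDegree ≤ 1)
    (hLwing : L * ((LamPoly F s2)ᵀ ⊗ₖ (1 : Matrix (Fin n) (Fin n) (Polynomial F))) = 0)
    (hLmin : IsMinimalBasis L) :
    (∀ r c, ((concatWing F s1 s2 n K L) r c).natDegree ≤ 1) ∧
    (concatWing F s1 s2 n K L) *
        ((LamPoly F (s1+s2))ᵀ ⊗ₖ (1 : Matrix (Fin n) (Fin n) (Polynomial F))) = 0 ∧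
    IsMinimalBasis (concatWing F s1 s2 n K L) := by
  classical
  have hKw := (wing_iff K).mp hKwing
  have hLw := (wing_iff L).mp hLwing
  set S := concatWing F s1 s2 n K L with hS
  have hSw : ∀ r j, ∑ c : Fin (s1+s2+1), S r (c, j) * X ^ (s1 + s2 - (c:ℕ)) = 0 :=
    concat_wing K L hKw hLw
  have hdeg : ∀ r c, (S r c).natDegree ≤ 1 := by
    intro r c
    simp only [hS, concatWing, Matrix.of_apply]
    split_ifs with h1 h2 h3
    · exact hKpencil _ _
    · simp
    · exact hLpencil _ _
    · simp
  have hli : LinearIndependent (RatFunc F) (fun i => ratRow (S i)) :=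
    concat_li K L hKw hKmin.1 hLmin.1
  refine ⟨hdeg, (wing_iff S).mpr hSw, hli, ?_⟩
  intro m R hRli hspan
  have h1 : polyOrder S ≤ (s1+s2) * n := by
    rw [polyOrder]
    calc ∑ r : Fin (s1+s2) × Fin n, rowDegree (S r)
        ≤ ∑ _r : Fin (s1+s2) × Fin n, 1 :=
          Finset.sum_le_sum fun r _ => Finset.sup_le fun c _ => hdeg r c
      _ = (s1+s2) * n := by simp [Finset.card_univ]
  have h2 : m = (s1+s2) * n := by
    have hr1 : Module.finrank (RatFunc F) ↥(rowSpan R) = m := by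
      rw [rowSpan, finrank_span_eq_card hRli]; simp
    have hr2 : Module.finrank (RatFunc F) ↥(rowSpan S) = (s1+s2) * n := by
      rw [rowSpan, finrank_span_eq_card hli]; simp
    rw [← hr1, hspan, hr2]
  have h3 : ∀ i : Fin m, 1 ≤ rowDegree (R i) := by
    intro i
    by_contra hcon
    have hzero : rowDegree (R i) = 0 := by omega
    have hmem : ratRow (R i) ∈ rowSpan S := by
      rw [← hspan]; exact Submodule.subset_span ⟨i, rfl⟩
    have hker := span_ker S hSw (ratRow (R i)) hmem
    have hpoly : ∀ j, ∑ c : Fin (s1+s2+1), R i (c, j) * X ^ (s1 + s2 - (c:ℕ)) = 0 := by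
      intro j
      apply IsFractionRing.injective (Polynomial F) (RatFunc F)
      rw [map_sum, map_zero]
      have := hker j
      simpa only [ratRow, _root_.map_mul] using this
    have hR0 : R i = 0 := const_row_zero (R i) hpoly hzero
    exact hRli.ne_zero i (by funext cc; simp [ratRow, hR0])
  calc polyOrder S ≤ (s1+s2) * n := h1
    _ = m := h2.symm
    _ = ∑ _i : Fin m, 1 := by simp
    _ ≤ polyOrder R := Finset.sum_le_sum fun i _ => h3 i
end

section
/- Let 𝐭 be an index tuple with indices from {0,...,k−1} and let (a:b) be a string (consecutive integers a, a+1, ..., b) with indices from {0,...,k−2}. Then the concatenation (𝐭, a:b) satisfies the Successor Infix Property if and only if 𝐭 satisfies the SIP and no c ∈ {a,...,b} is a head of 𝐭. -/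
/-- The Successor Infix Property: between any two equal indices of the tuple there is an
occurrence of their successor. -/
def SIP (t : List ℕ) : Prop :=
  ∀ a b : Fin t.length, a < b → t.get a = t.get b →
    ∃ c : Fin t.length, a < c ∧ c < b ∧ t.get c = t.get a + 1

/-- One swap of two adjacent distinct commuting indices (indices differing by ≥ 2). -/
def CommuteStep (t t' : List ℕ) : Prop :=
  ∃ (u v : List ℕ) (x y : ℕ), x ≠ y ∧ x + 1 ≠ y ∧ y + 1 ≠ x ∧
    t = u ++ x :: y :: v ∧ t' = u ++ y :: x :: v

/-- Equivalence of index tuples: generated by swapping adjacent commuting indices. -/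
def TupleEquiv : List ℕ → List ℕ → Prop := Relation.ReflTransGen CommuteStep

/-- The string `(a : b) = (a, a+1, ..., b)`. -/
def strTuple (a b : ℕ) : List ℕ := List.range' a (b + 1 - a)

/-- The tuple `(a_s : b_s, ..., a_1 : b_1)` built from a list of pairs of endpoints. -/
def buildCSF (ps : List (ℕ × ℕ)) : List ℕ :=
  (ps.map fun p => strTuple p.1 p.2).flatten

/-- `ps` encodes a tuple in column standard form: each pair `(a_j, b_j)` has `a_j ≤ b_j`
and the heads `b_s > b_{s-1} > ... > b_1` are strictly decreasing. -/
def IsCSFDecomp (ps : List (ℕ × ℕ)) : Prop :=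
  (∀ pr ∈ ps, pr.1 ≤ pr.2) ∧ List.Chain' (· > ·) (ps.map Prod.snd)

/-- The set of heads of an index tuple `t`: the right endpoints of the strings of the
column standard form of `t`. -/
def headsSet (t : List ℕ) : Set ℕ :=
  {h | ∃ ps, IsCSFDecomp ps ∧ TupleEquiv t (buildCSF ps) ∧ h ∈ ps.map Prod.snd}

/-!
Restricting a tuple to the two letters `x, x + 1` (`projPair x`) commutes with every swap of
commuting letters, and the SIP says exactly that no such restriction has two adjacent `x`s.
So `t ++ s` has the SIP iff `t` and `s` do and nothing goes wrong at the seam: whenever the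
restriction of `t` ends in `x`, that of `s` must not start with `x`. For `s = (a:b)` the
restriction starts with `x` exactly when `a ≤ x ≤ b`.

"The restriction of `t` to `x, x + 1` ends in `x`" (`IsHead x t`) is invariant under equivalence,
and on a column standard form it singles out exactly the heads. Every SIP tuple has a column
standard form: its largest letter `M` occurs once, and the string ending at `M` can be assembled
from right to left and pulled to the front, because the last `c - 1` before the string `(c:M)`
occurs only once and everything after it commutes past `(c:M)`.
-/
variable {x a b : ℕ} {s t : List ℕ}

theorem sip_iff_forall_eq_append :
    SIP t ↔ ∀ x u m w, t = u ++ x :: (m ++ x :: w) → x + 1 ∈ m := by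
  constructor
  · rintro h x u m w rfl
    obtain ⟨⟨c, hc⟩, hic, hcj, hcx⟩ :=
      h ⟨u.length, by simp⟩ ⟨u.length + (m.length + 1), by simp⟩ (by simp [Fin.lt_def]) (by simp)
    simp only [Fin.lt_def] at hic hcj
    obtain ⟨k, rfl⟩ : ∃ k, c = u.length + (k + 1) := ⟨c - (u.length + 1), by omega⟩
    have hk : k < m.length := by omega
    have hmk : (u ++ x :: (m ++ x :: w))[u.length + (k + 1)] = m[k] := by
      simp [List.getElem_append_left, hk]
    simp only [List.get_eq_getElem, hmk] at hcx
    simpa [hcx] using List.getElem_mem hk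
  · rintro h ⟨i, hi⟩ ⟨j, hj⟩ hij hx
    simp only [Fin.lt_def, List.get_eq_getElem] at hij hx ⊢
    have hdrop : t.drop (i + 1) = (t.drop (i + 1)).take (j - (i + 1)) ++ t.drop j := by
      conv_lhs => rw [← List.take_append_drop (j - (i + 1)) (t.drop (i + 1))]
      rw [List.drop_drop, Nat.add_sub_cancel' hij]
    have ht : t = t.take i ++ t[i] ::
        ((t.drop (i + 1)).take (j - (i + 1)) ++ t[i] :: t.drop (j + 1)) := by
      rw [hx, ← List.drop_eq_getElem_cons hj, ← hdrop, ← hx, ← List.drop_eq_getElem_cons hi,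
        List.take_append_drop]
    obtain ⟨k, hk, hmk⟩ := List.getElem_of_mem (h _ _ _ _ ht)
    simp only [List.length_take, List.length_drop] at hk
    refine ⟨⟨i + 1 + k, by omega⟩, Nat.lt_add_right k i.lt_succ_self,
      show i + 1 + k < j by omega, by simpa using hmk⟩

theorem SIP.of_nodup (h : t.Nodup) : SIP t := fun _ _ hij hx =>
  absurd ((h.get_inj_iff).mp hx) hij.ne

lemma not_mem_of_sip_of_succ_not_mem {u w : List ℕ} (h : SIP (u ++ x :: w))
    (hx : x + 1 ∉ u ++ x :: w) : x ∉ u ∧ x ∉ w := by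
  rw [sip_iff_forall_eq_append] at h
  constructor <;> intro hmem <;> obtain ⟨p, q, rfl⟩ := List.append_of_mem hmem
  · exact hx (by simp [h x p q w (by simp)])
  · exact hx (by simp [h x u p q (by simp)])

def projPair (x : ℕ) (t : List ℕ) : List ℕ := t.filter fun z => z = x ∨ z = x + 1

def IsHead (x : ℕ) (t : List ℕ) : Prop := (projPair x t).getLast? = some x

@[simp]
lemma projPair_append (x : ℕ) (s t : List ℕ) :
    projPair x (s ++ t) = projPair x s ++ projPair x t :=
  List.filter_append ..

@[simp]
lemma projPair_cons_self (x : ℕ) (t : List ℕ) : projPair x (x :: t) = x :: projPair x t := by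
  simp [projPair]

lemma mem_projPair {y : ℕ} : y ∈ projPair x t ↔ y ∈ t ∧ (y = x ∨ y = x + 1) := by
  simp [projPair]

lemma projPair_eq_nil_iff : projPair x t = [] ↔ x ∉ t ∧ x + 1 ∉ t := by
  simp only [projPair, List.filter_eq_nil_iff, decide_eq_true_eq]
  grind

theorem sip_iff_isChain_projPair :
    SIP t ↔ ∀ x, (projPair x t).IsChain fun p q => p = x → q ≠ x := by
  rw [sip_iff_forall_eq_append]
  constructor
  · intro h x
    rw [List.isChain_iff_forall_rel_of_append_cons_cons]
    intro p q l₁ l₂ hP hp hq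
    rw [hp, hq] at hP
    -- adjacent `x`s of the restriction are two `x`s of `t` with no `x + 1` between them
    obtain ⟨t₁, t₂, rfl, -, h₂⟩ := List.filter_eq_append_iff.mp hP
    obtain ⟨u, t₃, rfl, -, -, h₃⟩ := List.filter_eq_cons_iff.mp h₂
    obtain ⟨m, w, rfl, hm, -, -⟩ := List.filter_eq_cons_iff.mp h₃
    exact hm _ (h x (t₁ ++ u) m w (by simp)) (by simp)
  · intro h x u m w rfl
    by_contra hm
    have hhead : (projPair x m ++ x :: projPair x w).head? = some x := by
      cases hP : projPair x m with
      | nil => rfl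
      | cons y _ =>
        obtain ⟨hym, rfl | rfl⟩ := mem_projPair.mp (hP ▸ List.mem_cons_self : y ∈ projPair x m)
        · rfl
        · exact absurd hym hm
    simpa [List.isChain_append, List.isChain_cons, hhead] using h x

theorem sip_append_iff :
    SIP (s ++ t) ↔ SIP s ∧ SIP t ∧ ∀ x, IsHead x s → (projPair x t).head? ≠ some x := by
  simp only [sip_iff_isChain_projPair, projPair_append, List.isChain_append, forall_and, IsHead]
  refine and_congr_right fun _ => and_congr_right fun _ => forall_congr' fun x => ?_
  simp only [Option.mem_def]
  constructor
  · intro h hl hh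
    exact h x hl x hh rfl rfl
  · rintro h p hp q hq rfl rfl
    exact h hp hq
lemma CommuteStep.projPair_eq (h : CommuteStep s t) (x : ℕ) : projPair x s = projPair x t := by
  obtain ⟨u, v, y, z, hyz, hyz', hzy, rfl, rfl⟩ := h
  simp only [projPair, List.filter_append, List.filter_cons]
  -- two commuting letters are never both in `{x, x + 1}`
  split_ifs <;> simp_all
  omega

namespace TupleEquiv

lemma trans {u : List ℕ} (h₁ : TupleEquiv s t) (h₂ : TupleEquiv t u) : TupleEquiv s u :=
  Relation.ReflTransGen.trans h₁ h₂

lemma projPair_eq (h : TupleEquiv s t) (x : ℕ) : projPair x s = projPair x t := by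
  induction h with
  | refl => rfl
  | tail _ hst ih => exact ih.trans (hst.projPair_eq x)

lemma sip_iff (h : TupleEquiv s t) : SIP s ↔ SIP t := by
  simp only [sip_iff_isChain_projPair, h.projPair_eq]

lemma isHead_iff (h : TupleEquiv s t) (x : ℕ) : IsHead x s ↔ IsHead x t := by
  rw [IsHead, IsHead, h.projPair_eq]

lemma append_left (h : TupleEquiv s t) (u : List ℕ) :
    TupleEquiv (u ++ s) (u ++ t) := by
  refine Relation.ReflTransGen.lift (u ++ ·) (fun s t hst => ?_) _ _ h
  obtain ⟨v, w, y, z, hyz, hyz', hzy, rfl, rfl⟩ := hst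
  exact ⟨u ++ v, w, y, z, hyz, hyz', hzy, by simp, by simp⟩

lemma append_right (h : TupleEquiv s t) (u : List ℕ) :
    TupleEquiv (s ++ u) (t ++ u) := by
  refine Relation.ReflTransGen.lift (· ++ u) (fun s t hst => ?_) _ _ h
  obtain ⟨v, w, y, z, hyz, hyz', hzy, rfl, rfl⟩ := hst
  exact ⟨v, w ++ u, y, z, hyz, hyz', hzy, by simp, by simp⟩

end TupleEquiv

lemma tupleEquiv_cons_append_comm {y : ℕ} {v : List ℕ}
    (h : ∀ z ∈ v, y ≠ z ∧ y + 1 ≠ z ∧ z + 1 ≠ y) (w : List ℕ) :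
    TupleEquiv (y :: (v ++ w)) (v ++ y :: w) := by
  induction v with
  | nil => exact .refl
  | cons z v ih =>
    obtain ⟨hyz, hyz', hzy⟩ := h z List.mem_cons_self
    refine .head ⟨[], v ++ w, y, z, hyz, hyz', hzy, rfl, rfl⟩ ?_
    exact (ih fun z' hz' => h z' (List.mem_cons_of_mem z hz')).append_left [z]

lemma tupleEquiv_append_comm {u v : List ℕ}
    (h : ∀ y ∈ u, ∀ z ∈ v, y ≠ z ∧ y + 1 ≠ z ∧ z + 1 ≠ y) : TupleEquiv (u ++ v) (v ++ u) := by
  induction u with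
  | nil => simpa using .refl
  | cons y u ih =>
    have hu := (ih fun y' hy' => h y' (List.mem_cons_of_mem y hy')).append_left [y]
    exact hu.trans (tupleEquiv_cons_append_comm (h y List.mem_cons_self) u)

lemma mem_strTuple : x ∈ strTuple a b ↔ a ≤ x ∧ x ≤ b := by
  simp only [strTuple, List.mem_range'_1]
  omega

lemma nodup_strTuple (a b : ℕ) : (strTuple a b).Nodup := List.nodup_range' ..

lemma strTuple_eq_nil (h : b < a) : strTuple a b = [] := by
  simp [strTuple]; omega

lemma strTuple_eq_cons (h : a ≤ b) : strTuple a b = a :: strTuple (a + 1) b := by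
  rw [strTuple, strTuple, show b + 1 - a = b + 1 - (a + 1) + 1 by omega, List.range'_succ]

lemma strTuple_eq_range'_append (h₁ : a ≤ x) (h₂ : x ≤ b + 1) :
    strTuple a b = List.range' a (x - a) ++ strTuple x b := by
  have := List.range'_append (s := a) (m := x - a) (n := b + 1 - x) (step := 1)
  rw [one_mul, Nat.add_sub_cancel' h₁, show x - a + (b + 1 - x) = b + 1 - a by omega] at this
  rw [strTuple, strTuple, this]

lemma projPair_eq_nil_of_forall_lt (h : ∀ y ∈ s, y < x) :
    projPair x s = [] :=
  projPair_eq_nil_iff.mpr ⟨fun hx => (h x hx).false, fun hx => by have := h _ hx; omega⟩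

lemma projPair_strTuple (h₁ : a ≤ x) (h₂ : x ≤ b) :
    projPair x (strTuple a b) = x :: projPair x (strTuple (x + 1) b) := by
  rw [strTuple_eq_range'_append h₁ (by omega), strTuple_eq_cons h₂, projPair_append,
    projPair_cons_self, projPair_eq_nil_of_forall_lt fun y hy => by simp at hy; omega,
    List.nil_append]

lemma projPair_strTuple_succ (h : x < b) : projPair x (strTuple (x + 1) b) = [x + 1] := by
  rw [strTuple_eq_cons h, projPair, List.filter_cons_of_pos (by simp), ← projPair,
    projPair_eq_nil_iff.mpr ⟨fun hm => ?_, fun hm => ?_⟩] <;>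
  simp only [mem_strTuple] at hm <;> omega

lemma isHead_strTuple_iff : IsHead x (strTuple a b) ↔ a ≤ b ∧ x = b := by
  constructor
  · intro h
    obtain ⟨hax, hxb⟩ := mem_strTuple.mp (mem_projPair.mp (List.mem_of_getLast? h)).1
    refine ⟨hax.trans hxb, hxb.antisymm (not_lt.mp fun hlt => ?_)⟩
    simp [IsHead, projPair_strTuple hax hxb, projPair_strTuple_succ hlt] at h
  · rintro ⟨h, rfl⟩
    rw [IsHead, projPair_strTuple h le_rfl, strTuple_eq_nil (Nat.lt_succ_self x)]
    rfl

lemma head?_projPair_strTuple_eq_some_iff :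
    (projPair x (strTuple a b)).head? = some x ↔ a ≤ x ∧ x ≤ b := by
  refine ⟨fun h => mem_strTuple.mp (mem_projPair.mp (List.mem_of_mem_head? h)).1,
    fun ⟨h₁, h₂⟩ => ?_⟩
  simp [projPair_strTuple h₁ h₂]

lemma isHead_append :
    IsHead x (s ++ t) ↔ IsHead x t ∨ IsHead x s ∧ x ∉ t ∧ x + 1 ∉ t := by
  rw [IsHead, IsHead, IsHead, projPair_append, List.getLast?_append, ← projPair_eq_nil_iff]
  cases ht : (projPair x t).getLast? with
  | none => simp [List.getLast?_eq_none_iff.mp ht]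
  | some y =>
    have : projPair x t ≠ [] := by rintro h; simp [h] at ht
    simp [this]

@[simp]
lemma buildCSF_cons (p : ℕ × ℕ) (ps : List (ℕ × ℕ)) :
    buildCSF (p :: ps) = strTuple p.1 p.2 ++ buildCSF ps := by
  simp [buildCSF]

lemma mem_buildCSF {y : ℕ} {ps : List (ℕ × ℕ)} :
    y ∈ buildCSF ps ↔ ∃ p ∈ ps, p.1 ≤ y ∧ y ≤ p.2 := by
  simp [buildCSF, mem_strTuple]

lemma isCSFDecomp_cons {p : ℕ × ℕ} {ps : List (ℕ × ℕ)} :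
    IsCSFDecomp (p :: ps) ↔ p.1 ≤ p.2 ∧ (∀ q ∈ ps, q.2 < p.2) ∧ IsCSFDecomp ps := by
  change _ ∧ List.IsChain _ _ ↔ _ ∧ _ ∧ _ ∧ List.IsChain _ _
  rw [List.forall_mem_cons, List.map_cons, List.isChain_iff_pairwise, List.isChain_iff_pairwise,
    List.pairwise_cons, List.forall_mem_map]
  tauto

theorem isHead_buildCSF_iff {ps : List (ℕ × ℕ)} (hps : IsCSFDecomp ps) :
    IsHead x (buildCSF ps) ↔ x ∈ ps.map Prod.snd := by
  induction ps with
  | nil => simp [IsHead, projPair, buildCSF]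
  | cons p ps ih =>
    obtain ⟨hp, hlt, hps⟩ := isCSFDecomp_cons.mp hps
    have hB : ∀ y ∈ buildCSF ps, y < p.2 := fun y hy => by
      obtain ⟨q, hq, -, hyq⟩ := mem_buildCSF.mp hy
      exact hyq.trans_lt (hlt q hq)
    rw [buildCSF_cons, isHead_append, ih hps, isHead_strTuple_iff, List.map_cons, List.mem_cons]
    constructor
    · rintro (h | ⟨⟨-, rfl⟩, -⟩)
      · exact .inr h
      · exact .inl rfl
    · rintro (rfl | h)
      · exact .inr ⟨⟨hp, rfl⟩, fun hm => (hB _ hm).false, fun hm => by have := hB _ hm; omega⟩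
      · exact .inl h

lemma forall_lt_of_not_mem {d : ℕ} {w : List ℕ} (h : ∀ y ∈ w, y < d + 1) (hd : d ∉ w) :
    ∀ y ∈ w, y < d :=
  fun y hy => lt_of_le_of_ne (Nat.le_of_lt_succ (h y hy)) fun hyd => hd (hyd ▸ hy)

lemma exists_tupleEquiv_strTuple_append {c M : ℕ} (hcM : c ≤ M) {u : List ℕ} (hu : SIP u)
    (hlt : ∀ y ∈ u, y < c) :
    ∃ c' ≤ M, ∃ v, (∀ y ∈ v, y < M) ∧ TupleEquiv (u ++ strTuple c M) (strTuple c' M ++ v) := by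
  induction c generalizing u with
  | zero =>
    obtain rfl : u = [] :=
      List.eq_nil_iff_forall_not_mem.mpr fun y hy => Nat.not_lt_zero y (hlt y hy)
    exact ⟨0, hcM, [], by simp, by simpa using .refl⟩
  | succ d ih =>
    have hcomm {w : List ℕ} (hw : ∀ y ∈ w, y < d) :
        TupleEquiv (w ++ strTuple (d + 1) M) (strTuple (d + 1) M ++ w) :=
      tupleEquiv_append_comm fun y hy z hz => by
        have := hw y hy; have := (mem_strTuple.mp hz).1; omega
    by_cases hd : d ∈ u
    · obtain ⟨u₁, u₂, rfl⟩ := List.append_of_mem hd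
      obtain ⟨hd₁, hd₂⟩ := not_mem_of_sip_of_succ_not_mem hu fun h => (hlt _ h).false
      simp only [List.forall_mem_append, List.forall_mem_cons] at hlt
      obtain ⟨hlt₁, -, hlt₂⟩ := hlt
      obtain ⟨c', hc', v, hv, he⟩ :=
        ih (by omega) (sip_append_iff.mp hu).1 (forall_lt_of_not_mem hlt₁ hd₁)
      refine ⟨c', hc', v ++ u₂, List.forall_mem_append.mpr ⟨hv, fun y hy => ?_⟩, ?_⟩
      · have := hlt₂ y hy; omega
      · have h₁ : TupleEquiv (u₁ ++ d :: u₂ ++ strTuple (d + 1) M)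
            (u₁ ++ d :: strTuple (d + 1) M ++ u₂) := by
          simpa using (hcomm (forall_lt_of_not_mem hlt₂ hd₂)).append_left (u₁ ++ [d])
        have h₂ := he.append_right u₂
        rw [strTuple_eq_cons (by omega)] at h₂
        simpa using h₁.trans h₂
    · exact ⟨d + 1, hcM, u, fun y hy => by have := hlt y hy; omega,
        hcomm (forall_lt_of_not_mem hlt hd)⟩

theorem exists_csf_of_forall_lt (k : ℕ) (ht : SIP t) (hlt : ∀ y ∈ t, y < k) :
    ∃ ps, IsCSFDecomp ps ∧ (∀ p ∈ ps, p.2 < k) ∧ TupleEquiv t (buildCSF ps) := by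
  induction k generalizing t with
  | zero =>
    obtain rfl : t = [] :=
      List.eq_nil_iff_forall_not_mem.mpr fun y hy => Nat.not_lt_zero y (hlt y hy)
    exact ⟨[], ⟨by simp, List.isChain_nil⟩, by simp, .refl⟩
  | succ k ih =>
    by_cases hk : k ∈ t
    · obtain ⟨u, w, rfl⟩ := List.append_of_mem hk
      obtain ⟨hku, hkw⟩ := not_mem_of_sip_of_succ_not_mem ht fun h => (hlt _ h).false
      simp only [List.forall_mem_append, List.forall_mem_cons] at hlt
      obtain ⟨hltu, -, hltw⟩ := hlt
      obtain ⟨c, hc, v, hv, he⟩ := exists_tupleEquiv_strTuple_append le_rfl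
        (sip_append_iff.mp ht).1 (forall_lt_of_not_mem hltu hku)
      have he' : TupleEquiv (u ++ k :: w) (strTuple c k ++ (v ++ w)) := by
        simpa [strTuple] using he.append_right w
      obtain ⟨ps, hps, hpk, he''⟩ := ih (sip_append_iff.mp (he'.sip_iff.mp ht)).2.1
        (List.forall_mem_append.mpr ⟨hv, forall_lt_of_not_mem hltw hkw⟩)
      refine ⟨(c, k) :: ps, isCSFDecomp_cons.mpr ⟨hc, hpk, hps⟩, ?_, ?_⟩
      · simpa using fun p q hp => (hpk (p, q) hp).trans k.lt_succ_self
      · simpa using he'.trans (he''.append_left _)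
    · obtain ⟨ps, hps, hpk, he⟩ := ih ht (forall_lt_of_not_mem hlt hk)
      exact ⟨ps, hps, fun p hp => (hpk p hp).trans k.lt_succ_self, he⟩

theorem exists_csf (ht : SIP t) : ∃ ps, IsCSFDecomp ps ∧ TupleEquiv t (buildCSF ps) :=
  let ⟨ps, hps, _, he⟩ :=
    exists_csf_of_forall_lt _ ht fun _ hy => Nat.lt_succ_of_le (List.le_sum_of_mem hy)
  ⟨ps, hps, he⟩

theorem mem_headsSet_iff (ht : SIP t) : x ∈ headsSet t ↔ IsHead x t := by
  constructor
  · rintro ⟨ps, hps, he, hx⟩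
    exact (he.isHead_iff x).mpr ((isHead_buildCSF_iff hps).mpr hx)
  · intro hx
    obtain ⟨ps, hps, he⟩ := exists_csf ht
    exact ⟨ps, hps, he, (isHead_buildCSF_iff hps).mp ((he.isHead_iff x).mp hx)⟩

theorem sip_append_string_iff_general (t : List ℕ) (a b : ℕ) :
    SIP (t ++ strTuple a b) ↔
      (SIP t ∧ ∀ c, a ≤ c → c ≤ b → c ∉ headsSet t) := by
  rw [sip_append_iff, and_congr_right_iff]
  intro ht
  simp only [SIP.of_nodup (nodup_strTuple a b), true_and, ne_eq,
    head?_projPair_strTuple_eq_some_iff, mem_headsSet_iff ht]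
  exact ⟨fun h c hac hcb hc => h c hc ⟨hac, hcb⟩, fun h c hc ⟨hac, hcb⟩ => h c hac hcb hc⟩

/-- Lemma: for a tuple `t` with indices from `{0,…,k-1}` and a string `(a:b)` with indices
from `{0,…,k-2}`, the concatenation `(t, a:b)` satisfies the SIP if and only if `t`
satisfies the SIP and no `c ∈ {a,…,b}` is a head of `t`. -/
theorem sip_append_string_iff (k : ℕ) (t : List ℕ) (ht : ∀ i ∈ t, i < k)
    (a b : ℕ) (hab : a ≤ b) (hb : b + 2 ≤ k) :
    SIP (t ++ strTuple a b) ↔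
      (SIP t ∧ ∀ c, a ≤ c → c ≤ b → c ∉ headsSet t) :=
  sip_append_string_iff_general t a b
end

section
/- Let 𝐭 = (a:b) be a string with indices from {0,...,k−1}, a ≥ 1, and let 𝒳 = (X_a,...,X_b) be n×n matrices. Then the product M_b(X_b) M_{b−1}(X_{b−1}) ⋯ M_a(X_a) equals the block-diagonal matrix I_{n(k−b−1)} ⊕ C ⊕ I_{n(a−1)}, where C is the (b−a+2)×(b−a+2) block matrix whose first block-column is (X_b, X_{b−1}, ..., X_a, I_n)^T (block-transpose) and whose remaining block-columns form the block matrix with I_n in positions (1,2),(2,3),...,(b−a+1, b−a+2) and zero elsewhere. -/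
set_option linter.unreachableTactic false
set_option linter.unusedTactic false
set_option linter.unnecessarySeqFocus false
set_option maxHeartbeats 1000000



/-- The elementary matrix `M_i(B)` (`0 ≤ i ≤ k-1`), as a `k×k` block matrix with `n×n`
blocks: for `i = 0` it is `I_{(k-1)n} ⊕ B`; for `1 ≤ i ≤ k-1` it is
`I_{(k-i-1)n} ⊕ [[B, I],[I, 0]] ⊕ I_{(i-1)n}`. -/
def elemP (F : Type*) [Field F] (k n : ℕ) (i : ℕ) (B : Matrix (Fin n) (Fin n) F) :
    Matrix (Fin k × Fin n) (Fin k × Fin n) F :=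
  Matrix.of fun rc cc =>
    if (rc.1 : ℕ) + i + 1 = k ∧ (cc.1 : ℕ) + i + 1 = k then B rc.2 cc.2
    else if (rc.1 : ℕ) + i + 1 = k ∧ (cc.1 : ℕ) + i = k then (if rc.2 = cc.2 then 1 else 0)
    else if (rc.1 : ℕ) + i = k ∧ (cc.1 : ℕ) + i + 1 = k then (if rc.2 = cc.2 then 1 else 0)
    else if (rc.1 : ℕ) + i = k ∧ (cc.1 : ℕ) + i = k then 0
    else if rc = cc then 1 else 0

/-- The elementary matrix `M_{-i}(B)` (`1 ≤ i ≤ k`), as a `k×k` block matrix with `n×n`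
blocks: for `i = k` it is `B ⊕ I_{(k-1)n}`; for `1 ≤ i ≤ k-1` it is
`I_{(k-i-1)n} ⊕ [[0, I],[I, B]] ⊕ I_{(i-1)n}`. -/
def elemN (F : Type*) [Field F] (k n : ℕ) (i : ℕ) (B : Matrix (Fin n) (Fin n) F) :
    Matrix (Fin k × Fin n) (Fin k × Fin n) F :=
  Matrix.of fun rc cc =>
    if (rc.1 : ℕ) + i = k ∧ (cc.1 : ℕ) + i = k then B rc.2 cc.2
    else if (rc.1 : ℕ) + i + 1 = k ∧ (cc.1 : ℕ) + i = k then (if rc.2 = cc.2 then 1 else 0)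
    else if (rc.1 : ℕ) + i = k ∧ (cc.1 : ℕ) + i + 1 = k then (if rc.2 = cc.2 then 1 else 0)
    else if (rc.1 : ℕ) + i + 1 = k ∧ (cc.1 : ℕ) + i + 1 = k then 0
    else if rc = cc then 1 else 0

lemma mul_elemP (F : Type*) [Field F] (k n i : ℕ) (hik : i + 1 ≤ k) (hi : 1 ≤ i)
    (A : Matrix (Fin k × Fin n) (Fin k × Fin n) F) (B : Matrix (Fin n) (Fin n) F)
    (rc cc : Fin k × Fin n) :
    (A * elemP F k n i B) rc cc =
      if (cc.1 : ℕ) + i + 1 = k then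
        (∑ y, A rc (cc.1, y) * B y cc.2) + A rc (⟨k - i, by omega⟩, cc.2)
      else if (cc.1 : ℕ) + i = k then A rc (⟨k - i - 1, by omega⟩, cc.2)
      else A rc cc := by
  rw [Matrix.mul_apply, Fintype.sum_prod_type]
  split_ifs with h1 h2
  · have key : ∀ (j1 : Fin k) (j2 : Fin n), elemP F k n i B (j1, j2) cc =
        (if j1 = cc.1 then B j2 cc.2 else 0) +
        (if j1 = (⟨k - i, by omega⟩ : Fin k) then (if j2 = cc.2 then 1 else 0) else 0) := by
      intro j1 j2
      simp only [elemP, Matrix.of_apply, Prod.ext_iff, Fin.ext_iff]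
      split_ifs <;> first | rfl | omega | simp_all | (exfalso; omega)
    simp only [key, mul_add, Finset.sum_add_distrib, mul_ite, ite_mul, zero_mul, mul_zero,
      mul_one]
    congr 1
    · rw [Finset.sum_comm]
      simp [Finset.sum_ite_eq, Finset.sum_ite_eq']
    · rw [Finset.sum_comm]
      simp [Finset.sum_ite_eq, Finset.sum_ite_eq']
  · have key : ∀ (j1 : Fin k) (j2 : Fin n), elemP F k n i B (j1, j2) cc =
        (if j1 = (⟨k - i - 1, by omega⟩ : Fin k) then (if j2 = cc.2 then 1 else 0) else 0) := by
      intro j1 j2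
      simp only [elemP, Matrix.of_apply, Prod.ext_iff, Fin.ext_iff]
      split_ifs <;> first | rfl | omega | simp_all | (exfalso; omega)
    simp only [key, mul_ite, mul_zero, mul_one]
    rw [Finset.sum_comm]
    simp [Finset.sum_ite_eq, Finset.sum_ite_eq']
  · have key : ∀ (j1 : Fin k) (j2 : Fin n), elemP F k n i B (j1, j2) cc =
        (if j1 = cc.1 then (if j2 = cc.2 then 1 else 0) else 0) := by
      intro j1 j2
      simp only [elemP, Matrix.of_apply, Prod.ext_iff, Fin.ext_iff]
      split_ifs <;> first | rfl | omega | simp_all | (exfalso; omega)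
    simp only [key, mul_ite, mul_zero, mul_one]
    rw [Finset.sum_comm]
    simp [Finset.sum_ite_eq, Finset.sum_ite_eq']

def strMat (F : Type*) [Field F] (k n a b : ℕ) (Xf : ℕ → Matrix (Fin n) (Fin n) F) :
    Matrix (Fin k × Fin n) (Fin k × Fin n) F :=
  Matrix.of fun rc cc =>
    if k ≤ (rc.1 : ℕ) + b + 1 ∧ (rc.1 : ℕ) + a ≤ k ∧
        k ≤ (cc.1 : ℕ) + b + 1 ∧ (cc.1 : ℕ) + a ≤ k then
      (if (cc.1 : ℕ) + b + 1 = k then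
        (if (rc.1 : ℕ) + a = k then (if rc.2 = cc.2 then 1 else 0)
         else Xf (k - 1 - (rc.1 : ℕ)) rc.2 cc.2)
       else if (cc.1 : ℕ) = (rc.1 : ℕ) + 1 then (if rc.2 = cc.2 then 1 else 0)
       else 0)
    else if rc = cc then 1 else 0

lemma strMat_col_out (F : Type*) [Field F] (k n a b : ℕ) (Xf : ℕ → Matrix (Fin n) (Fin n) F)
    (rc : Fin k × Fin n) (c1 : Fin k) (c2 : Fin n)
    (h : ¬ (k ≤ (c1 : ℕ) + b + 1 ∧ (c1 : ℕ) + a ≤ k)) :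
    strMat F k n a b Xf rc (c1, c2) = if rc = (c1, c2) then 1 else 0 := by
  simp only [strMat, Matrix.of_apply]
  rw [if_neg (by tauto)]

theorem aux_string (F : Type*) [Field F] (k n a b : ℕ)
    (ha : 1 ≤ a) (hab : a ≤ b) (hb : b < k)
    (Xf : ℕ → Matrix (Fin n) (Fin n) F) :
    ((List.range (b + 1 - a)).map fun t => elemP F k n (a + t) (Xf (a + t))).prod =
      strMat F k n a b Xf := by
  induction b, hab using Nat.le_induction with
  | base =>
    rw [show a + 1 - a = 1 by omega]
    simp only [List.range_succ, List.range_zero, List.nil_append, List.map_cons, List.map_nil,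
      List.prod_cons, List.prod_nil, mul_one, Nat.add_zero]
    ext rc cc
    simp only [elemP, strMat, Matrix.of_apply, Prod.ext_iff, Fin.ext_iff]
    split_ifs <;>
      first
      | rfl | omega | (exfalso; omega) | (congr 3 <;> omega) | (congr 2 <;> omega)
      | (simp_all; done) | simp_all
  | succ b hab ih =>
    have hbk : b < k := by omega
    rw [show b + 1 + 1 - a = (b + 1 - a) + 1 by omega, List.range_succ, List.map_append,
      List.prod_append, List.map_singleton, List.prod_singleton,
      show a + (b + 1 - a) = b + 1 by omega, ih hbk]
    ext rc cc
    rw [mul_elemP F k n (b + 1) (by omega) (by omega)]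
    by_cases h1 : (cc.1 : ℕ) + (b + 1) + 1 = k
    · rw [if_pos h1]
      have hs : ∀ y : Fin n, strMat F k n a b Xf rc (cc.1, y) =
          if rc = (cc.1, y) then 1 else 0 := fun y =>
        strMat_col_out F k n a b Xf rc cc.1 y (by omega)
      simp only [hs, ite_mul, one_mul, zero_mul, Prod.ext_iff]
      by_cases hr : rc.1 = cc.1
      · simp only [hr, true_and]
        rw [show (∑ x : Fin n, if rc.2 = x then Xf (b + 1) x cc.2 else 0)
            = Xf (b + 1) rc.2 cc.2 by simp [Finset.sum_ite_eq]]
        simp only [strMat, Matrix.of_apply, Prod.ext_iff, Fin.ext_iff]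
        split_ifs <;>
          first
          | rfl | omega | (exfalso; omega)
          | ((try rw [add_zero]); (try rw [zero_add]);
             first | rfl | (congr 3 <;> omega) | (congr 2 <;> omega))
          | (simp_all; done) | simp_all
      · simp only [hr, false_and, if_false, Finset.sum_const_zero, zero_add]
        simp only [strMat, Matrix.of_apply, Prod.ext_iff, Fin.ext_iff]
        split_ifs <;>
          first
          | rfl | omega | (exfalso; omega)
          | ((try rw [add_zero]); (try rw [zero_add]);
             first | rfl | (congr 3 <;> omega) | (congr 2 <;> omega))
          | (simp_all; done) | simp_all
    · rw [if_neg h1]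
      simp only [strMat, Matrix.of_apply, Prod.ext_iff, Fin.ext_iff]
      split_ifs <;>
        first
        | rfl | omega | (exfalso; omega)
        | ((try rw [add_zero]); (try rw [zero_add]);
           first | rfl | (congr 3 <;> omega) | (congr 2 <;> omega))
        | (simp_all; done) | simp_all

/-- Lemma (string product): for a string `(a:b)` with `1 ≤ a ≤ b ≤ k-1` and matrices
`X_a,…,X_b`, the product `M_a(X_a) M_{a+1}(X_{a+1}) ⋯ M_b(X_b)` equals the block-diagonal
matrix `I_{n(k-b-1)} ⊕ C ⊕ I_{n(a-1)}`, where `C` has first block-column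
`(X_b, X_{b-1}, …, X_a, Iₙ)ᵀ` (block-transpose) and identity blocks on positions
`(1,2), (2,3), …, (b-a+1, b-a+2)`, and zeros elsewhere. -/
theorem string_product_block_structure (F : Type*) [Field F] (k n a b : ℕ)
    (ha : 1 ≤ a) (hab : a ≤ b) (hb : b < k)
    (Xf : ℕ → Matrix (Fin n) (Fin n) F) :
    ((List.range (b + 1 - a)).map fun t => elemP F k n (a + t) (Xf (a + t))).prod =
    Matrix.of fun rc cc =>
      if k ≤ (rc.1 : ℕ) + b + 1 ∧ (rc.1 : ℕ) + a ≤ k ∧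
          k ≤ (cc.1 : ℕ) + b + 1 ∧ (cc.1 : ℕ) + a ≤ k then
        (if (cc.1 : ℕ) + b + 1 = k then
          (if (rc.1 : ℕ) + a = k then (if rc.2 = cc.2 then 1 else 0)
           else Xf (k - 1 - (rc.1 : ℕ)) rc.2 cc.2)
         else if (cc.1 : ℕ) = (rc.1 : ℕ) + 1 then (if rc.2 = cc.2 then 1 else 0)
         else 0)
      else if rc = cc then 1 else 0 :=
  aux_string F k n a b ha hab hb Xf
end
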